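/- Let n ≥ 1 and 0 ≤ δ < 1. There exists N₀ (depending only on n and δ) such that for every integer N' ≥ N₀ the kernel K(ξ₁,ξ₂) = (1+|ξ₁|)^{−nδ/2}(1+|ξ₂|)^{−nδ/2}·(1 + |ξ₁−ξ₂|^{N'}/(1+|ξ₁|+|ξ₂|)^{δN'})^{−1/2} on ℝⁿ×ℝⁿ satisfies sup_{ξ₁∈ℝⁿ} ∫_{ℝⁿ} K(ξ₁,ξ₂) dξ₂ < ∞ (and by symmetry sup_{ξ₂∈ℝⁿ} ∫_{ℝⁿ} K(ξ₁,ξ₂) dξ₁ < ∞), so that by Schur's lemma K is the kernel of a bounded operator on L²(ℝⁿ). -/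

import Mathlib

/-!
Write `a = 1 + |ξ₁|`, `b = 1 + |ξ₂|`, `r = |ξ₁ - ξ₂|`, so that `1 + |ξ₁| + |ξ₂| = a + b - 1`,
and split according to whether `2r ≤ a + b - 1`.

Near the diagonal `a` and `b` are comparable, and the kernel is at most a constant times
`a^{-nδ} (1 + r / a^δ)^{-(n+1)}`: the `L¹`-normalised rescaling of `(1 + |u|)^{-(n+1)}` at scale
`a^δ`, centred at `ξ₁`. Away from it `r ≳ a + b - 1`, so the last factor alone is at most
`(a + b - 1)^{-(1-δ)N/2} ≲ b^{-(n+1)}` as soon as `(1 - δ) N ≥ 2(n + 1)`. Both dominating functions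
have integrals in `ξ₂` bounded independently of `ξ₁`; the kernel is symmetric.
-/

open MeasureTheory Real Complex SchwartzMap
open scoped ENNReal NNReal BigOperators

noncomputable section

/-- Euclidean `n`-space. -/
abbrev Rn (n : ℕ) : Type := EuclideanSpace ℝ (Fin n)

namespace OIOPaper

/-- Standard basis vector of `ℝⁿ`. -/
def e (n : ℕ) (i : Fin n) : Rn n := EuclideanSpace.single i (1 : ℝ)

/-- Directional derivative along the vector `v`. -/
def dAlong {E F : Type*} [NormedAddCommGroup E] [NormedSpace ℝ E]
    [NormedAddCommGroup F] [NormedSpace ℝ F] (v : E) (f : E → F) : E → F :=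
  fun x => fderiv ℝ f x v

/-- Iterated directional derivative along a list of vectors (head is the outermost
derivative). -/
def dList {E F : Type*} [NormedAddCommGroup E] [NormedSpace ℝ E]
    [NormedAddCommGroup F] [NormedSpace ℝ F] (L : List E) (f : E → F) : E → F :=
  L.foldr dAlong f

/-- Directions in the product space `ℝⁿ × ℝⁿ` corresponding to a multi-index (as a list of
coordinates) of `ξ`-derivatives. -/
def dxi (n : ℕ) (α : List (Fin n)) : List (Rn n × Rn n) :=
  α.map fun i => ((0 : Rn n), e n i)

/-- Directions in the product space `ℝⁿ × ℝⁿ` corresponding to a multi-index (as a list of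
coordinates) of `x`-derivatives. -/
def dx (n : ℕ) (β : List (Fin n)) : List (Rn n × Rn n) :=
  β.map fun i => (e n i, (0 : Rn n))

/-- The Japanese bracket `⟨ξ⟩^s = (1+|ξ|²)^{s/2}`. -/
def jap {n : ℕ} (ξ : Rn n) (s : ℝ) : ℝ := (1 + ‖ξ‖ ^ 2) ^ (s / 2)

/-- The Hörmander class `S^m_{ρ,δ}(ℝⁿ)`:  `a` is smooth and
`|∂_ξ^α ∂_x^β a(x,ξ)| ≤ C_{α,β} ⟨ξ⟩^{m - ρ|α| + δ|β|}`. -/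
def HormClass (n : ℕ) (m ρ δ : ℝ) (a : Rn n × Rn n → ℂ) : Prop :=
  ContDiff ℝ (⊤ : ℕ∞) a ∧
  ∀ α β : List (Fin n), ∃ C > 0, ∀ x ξ : Rn n,
    ‖dList (dxi n α ++ dx n β) a (x, ξ)‖ ≤
      C * jap ξ (m - ρ * α.length + δ * β.length)

/-- The class `L^∞S^m_ρ(ℝⁿ)`: measurable in `x`, smooth in `ξ`, with
`‖∂_ξ^α a(·,ξ)‖_{L^∞_x} ≤ C_α ⟨ξ⟩^{m-ρ|α|}`. -/
def LinftySm (n : ℕ) (m ρ : ℝ) (a : Rn n × Rn n → ℂ) : Prop :=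
  Measurable a ∧
  (∀ x : Rn n, ContDiff ℝ (⊤ : ℕ∞) fun ξ => a (x, ξ)) ∧
  ∀ α : List (Fin n), ∃ C > 0, ∀ x ξ : Rn n,
    ‖dList (α.map (e n)) (fun ξ' => a (x, ξ')) ξ‖ ≤ C * jap ξ (m - ρ * α.length)

/-- `φ(x,ξ) - x·ξ`. -/
def phaseDiff (n : ℕ) (φ : Rn n × Rn n → ℝ) : Rn n × Rn n → ℝ :=
  fun p => φ p - (inner ℝ p.1 p.2 : ℝ)

/-- The phase class `𝔉^k`. -/
def FClass (n : ℕ) (k : ℝ) (φ : Rn n × Rn n → ℝ) : Prop :=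
  ContDiffOn ℝ (⊤ : ℕ∞) φ {p : Rn n × Rn n | p.2 ≠ 0} ∧
  (1 ≤ k → ∀ α : List (Fin n), 1 ≤ α.length →
    ∃ C > 0, ∀ x ξ : Rn n, 1 ≤ ‖ξ‖ →
      |dList (dxi n α) (phaseDiff n φ) (x, ξ)| ≤ C * ‖ξ‖ ^ (k - 1)) ∧
  (k < 1 → ∀ α β : List (Fin n), 1 ≤ α.length + β.length →
    ∃ C > 0, ∀ x ξ : Rn n, 1 ≤ ‖ξ‖ →
      |dList (dxi n α ++ dx n β) (phaseDiff n φ) (x, ξ)| ≤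
        C * ‖ξ‖ ^ (k - (α.length : ℝ)))

/-- The mixed Hessian matrix `(∂²φ/∂x_i∂ξ_j)(x,ξ)`. -/
def mixedHessian (n : ℕ) (φ : Rn n × Rn n → ℝ) (x ξ : Rn n) : Matrix (Fin n) (Fin n) ℝ :=
  Matrix.of fun i j => dList [(e n i, (0 : Rn n)), ((0 : Rn n), e n j)] φ (x, ξ)

/-- Strong non-degeneracy away from `ξ = 0`. -/
def SND (n : ℕ) (φ : Rn n × Rn n → ℝ) : Prop :=
  ∃ δ₀ > 0, ∀ x ξ : Rn n, ξ ≠ 0 → δ₀ ≤ |(mixedHessian n φ x ξ).det|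

/-- Strong non-degeneracy at every point of `ℝⁿ × ℝⁿ`. -/
def SNDAll (n : ℕ) (φ : Rn n × Rn n → ℝ) : Prop :=
  ∃ δ₀ > 0, ∀ x ξ : Rn n, δ₀ ≤ |(mixedHessian n φ x ξ).det|

/-- The strong `L²`-condition: `|∂_x^α ∂_ξ^β φ(x,ξ)| ≤ C_{α,β}` for `|α| ≥ 1`, `|β| ≥ 1`,
`|ξ| ≥ 1`. -/
def StrongL2 (n : ℕ) (φ : Rn n × Rn n → ℝ) : Prop :=
  ∀ α β : List (Fin n), 1 ≤ α.length → 1 ≤ β.length →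
    ∃ C > 0, ∀ x ξ : Rn n, 1 ≤ ‖ξ‖ →
      |dList (dx n α ++ dxi n β) φ (x, ξ)| ≤ C

/-- The weak `L²`-condition, on a set `S`. -/
def WeakL2On (n : ℕ) (φ : Rn n × Rn n → ℝ) (S : Set (Rn n × Rn n)) : Prop :=
  (∀ α : List (Fin n), 1 ≤ α.length → ∃ C > 0,
    ∀ x ξ : Rn n, (x, ξ) ∈ S → 1 ≤ ‖ξ‖ → ∀ i : Fin n,
      |dList (dx n α ++ dxi n [i]) φ (x, ξ)| ≤ C) ∧
  (∀ β : List (Fin n), 1 ≤ β.length → ∃ C > 0,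
    ∀ x ξ : Rn n, (x, ξ) ∈ S → 1 ≤ ‖ξ‖ → ∀ i : Fin n,
      |dList (dx n [i] ++ dxi n β) φ (x, ξ)| ≤ C)

/-- The low-frequency condition LF(μ). -/
def LFcond (n : ℕ) (μ : ℝ) (φ : Rn n × Rn n → ℝ) : Prop :=
  ∀ α β : List (Fin n), ∃ C > 0, ∀ x ξ : Rn n, 0 < ‖ξ‖ → ‖ξ‖ ≤ 2 →
    |dList (dxi n α ++ dx n β) (phaseDiff n φ) (x, ξ)| ≤
      C * ‖ξ‖ ^ (μ - (α.length : ℝ))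

/-- The `ξ`-gradient `∇_ξ φ(x,ξ)`. -/
def gradXi (n : ℕ) (φ : Rn n × Rn n → ℝ) (x ξ : Rn n) : Rn n :=
  (EuclideanSpace.equiv (Fin n) ℝ).symm fun i => dAlong ((0 : Rn n), e n i) φ (x, ξ)

/-- The `x`-gradient `∇_x φ(x,ξ)`. -/
def gradX (n : ℕ) (φ : Rn n × Rn n → ℝ) (x ξ : Rn n) : Rn n :=
  (EuclideanSpace.equiv (Fin n) ℝ).symm fun i => dAlong (e n i, (0 : Rn n)) φ (x, ξ)

/-- The Fourier transform `f̂(ξ) = ∫ e^{-ix·ξ} f(x) dx`. -/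
def fourierT {n : ℕ} (f : Rn n → ℂ) (ξ : Rn n) : ℂ :=
  ∫ x : Rn n, Complex.exp (-(Complex.I) * ((inner ℝ x ξ : ℝ) : ℂ)) * f x

/-- The inverse Fourier transform `(2π)^{-n} ∫ e^{ix·ξ} g(ξ) dξ`. -/
def invFourier {n : ℕ} (g : Rn n → ℂ) (x : Rn n) : ℂ :=
  (1 / (2 * Real.pi) ^ n : ℝ) •
    ∫ ξ : Rn n, Complex.exp (Complex.I * ((inner ℝ x ξ : ℝ) : ℂ)) * g ξ

/-- The oscillatory integral operator
`T_a^φ f(x) = (2π)^{-n} ∫ e^{iφ(x,ξ)} a(x,ξ) f̂(ξ) dξ`. -/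
def oio (n : ℕ) (a : Rn n × Rn n → ℂ) (φ : Rn n × Rn n → ℝ) (f : Rn n → ℂ)
    (x : Rn n) : ℂ :=
  (1 / (2 * Real.pi) ^ n : ℝ) •
    ∫ ξ : Rn n, Complex.exp (Complex.I * ((φ (x, ξ) : ℝ) : ℂ)) * a (x, ξ) * fourierT f ξ

/-- The frequency-localized oscillatory integral operator
`T_a^φ ψ(D) f(x) = (2π)^{-n} ∫ e^{iφ(x,ξ)} a(x,ξ) ψ(ξ) f̂(ξ) dξ`. -/
def oioLP (n : ℕ) (a : Rn n × Rn n → ℂ) (φ : Rn n × Rn n → ℝ) (ψ : Rn n → ℝ)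
    (f : Rn n → ℂ) (x : Rn n) : ℂ :=
  (1 / (2 * Real.pi) ^ n : ℝ) •
    ∫ ξ : Rn n, Complex.exp (Complex.I * ((φ (x, ξ) : ℝ) : ℂ)) * a (x, ξ) *
      ((ψ ξ : ℝ) : ℂ) * fourierT f ξ

/-- A generating function for a Littlewood–Paley partition of unity. -/
structure IsLPBase (n : ℕ) (ψ₀ : Rn n → ℝ) : Prop where
  smooth : ContDiff ℝ (⊤ : ℕ∞) ψ₀
  supp_zero : ∀ ξ : Rn n, 2 ≤ ‖ξ‖ → ψ₀ ξ = 0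
  eq_one : ∀ ξ : Rn n, ‖ξ‖ ≤ 1 → ψ₀ ξ = 1

/-- The Littlewood–Paley family `ψ_j(ξ) = ψ₀(2^{-j}ξ) - ψ₀(2^{-(j-1)}ξ)` (j ≥ 1). -/
def LPfam {n : ℕ} (ψ₀ : Rn n → ℝ) : ℕ → Rn n → ℝ
  | 0 => ψ₀
  | (j+1) => fun ξ => ψ₀ ((2:ℝ) ^ (-(j:ℤ) - 1) • ξ) - ψ₀ ((2:ℝ) ^ (-(j:ℤ)) • ξ)

/-- The fattened Littlewood–Paley pieces `Ψ_j = ψ_{j-1} + ψ_j + ψ_{j+1}` (with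
`ψ_{-1} := ψ₀`). -/
def LPfamBig {n : ℕ} (ψ₀ : Rn n → ℝ) (j : ℕ) : Rn n → ℝ :=
  fun ξ => LPfam ψ₀ (j - 1) ξ + LPfam ψ₀ j ξ + LPfam ψ₀ (j + 1) ξ

/-- The operator `ψ(D) f := (𝓕^{-1} ψ) * f`. -/
def LPop {n : ℕ} (ψ : Rn n → ℝ) (f : Rn n → ℂ) (x : Rn n) : ℂ :=
  ∫ y : Rn n, invFourier (fun ξ => ((ψ ξ : ℝ) : ℂ)) (x - y) * f y

/-- The Besov–Lipschitz quasi-norm `‖f‖_{B^s_{p,q}}`, valued in `ℝ≥0∞`. -/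
def besovNorm {n : ℕ} (ψ₀ : Rn n → ℝ) (s : ℝ) (p q : ℝ≥0∞) (f : Rn n → ℂ) : ℝ≥0∞ :=
  if q = ⊤ then
    ⨆ j : ℕ, ENNReal.ofReal ((2:ℝ) ^ ((j : ℝ) * s)) *
      eLpNorm (LPop (LPfam ψ₀ j) f) p volume
  else
    (∑' j : ℕ, (ENNReal.ofReal ((2:ℝ) ^ ((j : ℝ) * s)) *
        eLpNorm (LPop (LPfam ψ₀ j) f) p volume) ^ q.toReal) ^ (1 / q.toReal)

/-- The inner `ℓ^q`-expression of the Triebel–Lizorkin quasi-norm. -/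
def tlInner {n : ℕ} (ψ₀ : Rn n → ℝ) (s : ℝ) (q : ℝ≥0∞) (f : Rn n → ℂ)
    (x : Rn n) : ℝ≥0∞ :=
  if q = ⊤ then
    ⨆ j : ℕ, ENNReal.ofReal ((2:ℝ) ^ ((j : ℝ) * s)) * (‖LPop (LPfam ψ₀ j) f x‖₊ : ℝ≥0∞)
  else
    (∑' j : ℕ, (ENNReal.ofReal ((2:ℝ) ^ ((j : ℝ) * s)) *
        (‖LPop (LPfam ψ₀ j) f x‖₊ : ℝ≥0∞)) ^ q.toReal) ^ (1 / q.toReal)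

/-- The Triebel–Lizorkin quasi-norm `‖f‖_{F^s_{p,q}}` (for `p < ∞`), valued in `ℝ≥0∞`. -/
def tlNorm {n : ℕ} (ψ₀ : Rn n → ℝ) (s : ℝ) (p q : ℝ≥0∞) (f : Rn n → ℂ) : ℝ≥0∞ :=
  (∫⁻ x : Rn n, tlInner ψ₀ s q f x ^ p.toReal) ^ (1 / p.toReal)

/-- The closed axis-parallel cube with corner `c` and side length `l`. -/
def cube (n : ℕ) (c : Rn n) (l : ℝ) : Set (Rn n) :=
  {x | ∀ i, c i ≤ x i ∧ x i ≤ c i + l}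

/-- `k_Q = [1 - log₂ l_Q]`. -/
def kOf (l : ℝ) : ℤ := ⌊1 - Real.logb 2 l⌋

/-- The cube concentric with `cube n c l` with side length `t*l`. -/
def dilCube (n : ℕ) (c : Rn n) (l t : ℝ) : Set (Rn n) :=
  {x | ∀ i, |x i - (c i + l / 2)| ≤ t * l / 2}

/-- An `h^p`-atom supported in the cube with corner `c` and side length `l`. -/
def IsHpAtom (n : ℕ) (p : ℝ) (c : Rn n) (l : ℝ) (𝔞 : Rn n → ℂ) : Prop :=
  0 < l ∧ Measurable 𝔞 ∧
  (∀ x, x ∉ cube n c l → 𝔞 x = 0) ∧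
  (∀ x, ‖𝔞 x‖ ≤ (2:ℝ) ^ ((kOf l : ℝ) * n / p)) ∧
  (1 ≤ kOf l → ∀ α : Fin n → ℕ, ((∑ i, α i : ℕ) : ℤ) ≤ ⌊(n : ℝ) * (1 / p - 1)⌋ →
    ∫ x : Rn n, (∏ i, ((x i : ℝ) : ℂ) ^ α i) * 𝔞 x = 0)

/-- The frequency-localized kernel
`K_j(x,y) = (2π)^{-n} ∫ e^{i(φ(x,ξ) - y·ξ)} ψ_j(ξ) a(x,ξ) dξ` as a function of the
pair `p = (x,y)`. -/
def Kj (n : ℕ) (ψ₀ : Rn n → ℝ) (a : Rn n × Rn n → ℂ) (φ : Rn n × Rn n → ℝ) (j : ℕ)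
    (p : Rn n × Rn n) : ℂ :=
  (1 / (2 * Real.pi) ^ n : ℝ) •
    ∫ ξ : Rn n, Complex.exp (Complex.I * ((φ (p.1, ξ) - (inner ℝ p.2 ξ : ℝ) : ℝ) : ℂ)) *
      ((LPfam ψ₀ j ξ : ℝ) : ℂ) * a (p.1, ξ)

/-- The dyadic cube `2^{-(j-1)}(m + [0,1]ⁿ)`. -/
def dyadicCube (n : ℕ) (j : ℤ) (m : Fin n → ℤ) : Set (Rn n) :=
  {x | ∀ i, (m i : ℝ) * (2:ℝ) ^ (1 - j) ≤ x i ∧ x i ≤ ((m i : ℝ) + 1) * (2:ℝ) ^ (1 - j)}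

/-- The center of the dyadic cube `2^{-(j-1)}(m + [0,1]ⁿ)`. -/
def dyadicCenter (n : ℕ) (j : ℤ) (m : Fin n → ℤ) : Rn n :=
  (EuclideanSpace.equiv (Fin n) ℝ).symm fun i => ((m i : ℝ) + 1 / 2) * (2:ℝ) ^ (1 - j)

/-- `Ψ̌^{Q̃}(x) = 2^{-n k_{Q̃}/2} (𝓕^{-1}Ψ_{k_{Q̃}})(x - c_{Q̃})` for the dyadic cube
`Q̃` of level `j ≥ 0` indexed by `m`. -/
def psiCheckQ {n : ℕ} (ψ₀ : Rn n → ℝ) (j : ℕ) (m : Fin n → ℤ) (x : Rn n) : ℂ :=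
  ((2:ℝ) ^ (-(n : ℝ) * (j : ℝ) / 2) : ℝ) •
    invFourier (fun ξ => ((LPfamBig ψ₀ j ξ : ℝ) : ℂ)) (x - dyadicCenter n (j : ℤ) m)

/-- The sequence quasi-norm `‖b‖_{f^0_{∞,q}}` over the dyadic cubes in `𝒟_+`. -/
def fSeqNorm (n : ℕ) (q : ℝ≥0∞) (b : ℕ → (Fin n → ℤ) → ℂ) : ℝ≥0∞ :=
  ⨆ x : Rn n,
    if q = ⊤ then
      ⨆ jm : ℕ × (Fin n → ℤ),
        ENNReal.ofReal ((2:ℝ) ^ ((jm.1 : ℝ) * n / 2)) * (‖b jm.1 jm.2‖₊ : ℝ≥0∞) *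
          (dyadicCube n (jm.1 : ℤ) jm.2).indicator (fun _ => (1 : ℝ≥0∞)) x
    else
      (∑' jm : ℕ × (Fin n → ℤ),
        (ENNReal.ofReal ((2:ℝ) ^ ((jm.1 : ℝ) * n / 2)) * (‖b jm.1 jm.2‖₊ : ℝ≥0∞) *
          (dyadicCube n (jm.1 : ℤ) jm.2).indicator (fun _ => (1 : ℝ≥0∞)) x) ^ q.toReal) ^
        (1 / q.toReal)

/-- `R_{Q,j}(x) = Σ_{Q̃ ∈ 𝒟_j(Q)} b_{Q̃} Ψ̌^{Q̃}(x)` for the dyadic cube `Q` of level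
`kQ` indexed by `mQ`. -/
def RQj {n : ℕ} (ψ₀ : Rn n → ℝ) (kQ : ℤ) (mQ : Fin n → ℤ) (b : ℕ → (Fin n → ℤ) → ℂ)
    (j : ℕ) (x : Rn n) : ℂ :=
  ∑' mt : Fin n → ℤ,
    Set.indicator {mt' : Fin n → ℤ | dyadicCube n (j : ℤ) mt' ⊆ dyadicCube n kQ mQ}
      (fun mt' => b j mt' * psiCheckQ ψ₀ j mt' x) mt

/-- The cube concentric with the dyadic cube `(kQ, mQ)` with side length scaled by `t`. -/
def scaledDyadic (n : ℕ) (kQ : ℤ) (mQ : Fin n → ℤ) (t : ℝ) : Set (Rn n) :=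
  {x | ∀ i, |x i - dyadicCenter n kQ mQ i| ≤ t * (2:ℝ) ^ (1 - kQ) / 2}

/-- `ϰ = min(ρ, 1-k)`. -/
def kappaOf (ρ k : ℝ) : ℝ := min ρ (1 - k)

/-- `ζ = min(0, n(ρ-δ)/2)`. -/
def zetaOf (n : ℕ) (ρ δ : ℝ) : ℝ := min 0 ((n : ℝ) * (ρ - δ) / 2)

/-- `m_ϰ(p) = -n(1-ϰ)(1/p - 1/2)`. -/
def mkappa (n : ℕ) (ρ k p : ℝ) : ℝ := -(n : ℝ) * (1 - kappaOf ρ k) * (1 / p - 1 / 2)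

/-- `m(p) = -n(1-ϰ)(1/p - 1/2) + ζ`. -/
def mOf (n : ℕ) (ρ δ k p : ℝ) : ℝ := mkappa n ρ k p + zetaOf n ρ δ

/-- `m(p) = -n(1-ϰ)|1/p - 1/2| + ζ`. -/
def mOfAbs (n : ℕ) (ρ δ k p : ℝ) : ℝ :=
  -(n : ℝ) * (1 - kappaOf ρ k) * |1 / p - 1 / 2| + zetaOf n ρ δ

/-- `w(k,ρ)` from the kernel estimates. -/
def wOf (k ρ : ℝ) : ℝ := if k < 1 then min ρ (1 - k) else k - 1


/-- The kernel appearing in the Schur-test step. -/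
def schurKernel (n : ℕ) (δ : ℝ) (N' : ℕ) (ξ₁ ξ₂ : Rn n) : ℝ :=
  (1 + ‖ξ₁‖) ^ (-(n : ℝ) * δ / 2) * (1 + ‖ξ₂‖) ^ (-(n : ℝ) * δ / 2) *
    (1 + ‖ξ₁ - ξ₂‖ ^ N' / (1 + ‖ξ₁‖ + ‖ξ₂‖) ^ (δ * (N' : ℝ))) ^ (-(1 : ℝ) / 2)

section Profile

variable {a b r δ k : ℝ} {N : ℕ}

lemma rpow_neg_half_le_of_rpow_le {t X C : ℝ} (hX : 0 < X) (hC : 0 < C)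
    (h : X ^ (2 * k) ≤ C * (1 + t)) : (1 + t) ^ (-(1 : ℝ) / 2) ≤ √C * X ^ (-k) := by
  have hpos : 0 < X ^ (2 * k) / C := by positivity
  calc (1 + t) ^ (-(1 : ℝ) / 2) ≤ (X ^ (2 * k) / C) ^ (-(1 : ℝ) / 2) :=
        rpow_le_rpow_of_nonpos hpos (by rwa [div_le_iff₀' hC]) (by norm_num)
    _ = √C * X ^ (-k) := by
        rw [neg_div, rpow_neg hpos.le, div_rpow (by positivity) hC.le, inv_div, ← rpow_mul hX.le,
          sqrt_eq_rpow, rpow_neg hX.le, show 2 * k * (1 / 2) = k by ring, div_eq_mul_inv]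

lemma one_add_div_rpow_pow_le (ha : 1 ≤ a) (hb : 1 ≤ b) (hr : 0 ≤ r) (hba : b ≤ a + r)
    (hnear : 2 * r ≤ a + b - 1) (hδ0 : 0 ≤ δ) (hδ1 : δ ≤ 1) :
    (1 + r / a ^ δ) ^ N ≤ 8 ^ N * (1 + r ^ N / (a + b - 1) ^ (δ * N)) := by
  have hs : 0 < a + b - 1 := by linarith
  have hsδ : (a + b - 1) ^ δ / 4 ≤ a ^ δ := by
    rw [div_le_iff₀' (by norm_num)]
    calc (a + b - 1) ^ δ ≤ (4 * a) ^ δ := rpow_le_rpow (by linarith) (by linarith) hδ0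
      _ = 4 ^ δ * a ^ δ := mul_rpow (by norm_num) (by linarith)
      _ ≤ 4 * a ^ δ := by
          gcongr
          exact rpow_le_self_of_one_le (by norm_num) hδ1
  set v := r / (a + b - 1) ^ δ
  have hv : 0 ≤ v := by positivity
  have hu : r / a ^ δ ≤ 4 * v :=
    calc r / a ^ δ ≤ r / ((a + b - 1) ^ δ / 4) :=
          div_le_div_of_nonneg_left hr (by positivity) hsδ
      _ = 4 * v := by ring
  calc (1 + r / a ^ δ) ^ N ≤ (4 * (1 + v)) ^ N := by gcongr; linarith
    _ = 4 ^ N * (1 + v) ^ N := mul_pow _ _ _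
    _ ≤ 4 ^ N * (2 ^ N * (1 + v ^ N)) := by
        gcongr
        calc (1 + v) ^ N ≤ 2 ^ (N - 1) * (1 ^ N + v ^ N) :=
              add_pow_le zero_le_one hv N
          _ ≤ 2 ^ N * (1 + v ^ N) := by
              rw [one_pow]
              exact mul_le_mul_of_nonneg_right (pow_le_pow_right₀ one_le_two (N.sub_le 1))
                (by positivity)
    _ = 8 ^ N * (1 + r ^ N / (a + b - 1) ^ (δ * N)) := by
        rw [rpow_mul (by linarith), rpow_natCast, ← div_pow,
          show (8 : ℝ) ^ N = 4 ^ N * 2 ^ N by rw [← mul_pow]; norm_num]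
        ring

lemma rpow_le_two_pow_mul_of_far (ha : 1 ≤ a) (hb : 1 ≤ b) (hk : 0 ≤ k)
    (hN : 2 * k ≤ (1 - δ) * N) (hfar : a + b - 1 < 2 * r) :
    b ^ (2 * k) ≤ 2 ^ N * (1 + r ^ N / (a + b - 1) ^ (δ * N)) := by
  have hs : 1 ≤ a + b - 1 := by linarith
  have hsδ : 0 < (a + b - 1) ^ (δ * N) := by positivity
  have hr : 0 ≤ r := by linarith
  calc b ^ (2 * k) ≤ (a + b - 1) ^ (2 * k) := by gcongr; linarith
    _ ≤ (a + b - 1) ^ ((1 - δ) * N) := rpow_le_rpow_of_exponent_le hs hN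
    _ = (a + b - 1) ^ N / (a + b - 1) ^ (δ * N) := by
        rw [← rpow_natCast, ← rpow_sub (by linarith), sub_mul, one_mul]
    _ ≤ (2 * r) ^ N / (a + b - 1) ^ (δ * N) := by gcongr
    _ ≤ 2 ^ N * (1 + r ^ N / (a + b - 1) ^ (δ * N)) := by
        rw [mul_pow, mul_div_assoc]; gcongr; linarith [div_nonneg (pow_nonneg hr N) hsδ.le]

lemma decayFactor_le_of_near (ha : 1 ≤ a) (hb : 1 ≤ b) (hr : 0 ≤ r) (hba : b ≤ a + r)
    (hnear : 2 * r ≤ a + b - 1) (hδ0 : 0 ≤ δ) (hδ1 : δ ≤ 1) (hk : 2 * k ≤ N) :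
    (1 + r ^ N / (a + b - 1) ^ (δ * N)) ^ (-(1 : ℝ) / 2) ≤ √(8 ^ N) * (1 + r / a ^ δ) ^ (-k) := by
  have hX : 1 ≤ 1 + r / a ^ δ := by
    have : 0 < a := by linarith
    have : 0 ≤ r / a ^ δ := by positivity
    linarith
  refine rpow_neg_half_le_of_rpow_le (by linarith) (by positivity) ?_
  calc (1 + r / a ^ δ) ^ (2 * k) ≤ (1 + r / a ^ δ) ^ (N : ℝ) := rpow_le_rpow_of_exponent_le hX hk
    _ ≤ _ := by rw [rpow_natCast]; exact one_add_div_rpow_pow_le ha hb hr hba hnear hδ0 hδ1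

lemma decayFactor_le_of_far (ha : 1 ≤ a) (hb : 1 ≤ b) (hk : 0 ≤ k)
    (hN : 2 * k ≤ (1 - δ) * N) (hfar : a + b - 1 < 2 * r) :
    (1 + r ^ N / (a + b - 1) ^ (δ * N)) ^ (-(1 : ℝ) / 2) ≤ √(2 ^ N) * b ^ (-k) :=
  rpow_neg_half_le_of_rpow_le (by linarith) (by positivity)
    (rpow_le_two_pow_mul_of_far ha hb hk hN hfar)

lemma rpow_neg_mul_rpow_neg_le {c : ℝ} (ha : 0 < a) (hab : a ≤ 3 * b) (hc : 0 ≤ c) :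
    a ^ (-c) * b ^ (-c) ≤ 3 ^ c * a ^ (-(2 * c)) :=
  calc a ^ (-c) * b ^ (-c) ≤ a ^ (-c) * (a / 3) ^ (-c) := by
        gcongr ?_ * ?_
        · exact rpow_le_rpow_of_nonpos (by positivity) (by linarith) (by linarith)
    _ = 3 ^ c * a ^ (-(2 * c)) := by
        rw [div_rpow ha.le (by norm_num), rpow_neg (by norm_num : (0 : ℝ) ≤ 3), div_inv_eq_mul,
          show -(2 * c) = -c + -c by ring, rpow_add ha]
        ring

lemma schurKernel_profile_le {c : ℝ} (ha : 1 ≤ a) (hb : 1 ≤ b) (hr : 0 ≤ r) (hab : a ≤ b + r)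
    (hba : b ≤ a + r) (hδ0 : 0 ≤ δ) (hδ1 : δ ≤ 1) (hc : 0 ≤ c) (hk : 0 ≤ k)
    (hN : 2 * k ≤ (1 - δ) * N) :
    a ^ (-c) * b ^ (-c) * (1 + r ^ N / (a + b - 1) ^ (δ * N)) ^ (-(1 : ℝ) / 2) ≤
      3 ^ c * √(8 ^ N) * (a ^ (-(2 * c)) * (1 + r / a ^ δ) ^ (-k) + b ^ (-k)) := by
  have hT : 0 ≤ (1 + r ^ N / (a + b - 1) ^ (δ * N)) ^ (-(1 : ℝ) / 2) := by
    have : 0 < a + b - 1 := by linarith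
    positivity
  rcases le_or_gt (2 * r) (a + b - 1) with hnear | hfar
  · have hNk : 2 * k ≤ N := hN.trans (by nlinarith [(N.cast_nonneg : (0 : ℝ) ≤ N)])
    calc _ ≤ 3 ^ c * a ^ (-(2 * c)) * (√(8 ^ N) * (1 + r / a ^ δ) ^ (-k)) :=
          mul_le_mul (rpow_neg_mul_rpow_neg_le (by linarith) (by linarith) hc)
            (decayFactor_le_of_near ha hb hr hba hnear hδ0 hδ1 hNk) hT (by positivity)
      _ ≤ _ := by
          rw [mul_add]
          exact le_add_of_le_of_nonneg (le_of_eq (by ring)) (by positivity)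
  · have hw : a ^ (-c) * b ^ (-c) ≤ 1 :=
      mul_le_one₀ (rpow_le_one_of_one_le_of_nonpos ha (by linarith)) (by positivity)
        (rpow_le_one_of_one_le_of_nonpos hb (by linarith))
    calc _ ≤ 1 * (√(2 ^ N) * b ^ (-k)) :=
          mul_le_mul hw (decayFactor_le_of_far ha hb hk hN hfar) hT zero_le_one
      _ ≤ 3 ^ c * √(8 ^ N) * b ^ (-k) := by
          rw [one_mul]
          gcongr
          exact (sqrt_le_sqrt (by gcongr; norm_num)).trans
            (le_mul_of_one_le_left (sqrt_nonneg _) (one_le_rpow (by norm_num) hc))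
      _ ≤ _ := by
          gcongr
          exact le_add_of_nonneg_left (by positivity)

end Profile

lemma integral_inv_pow_mul_comp_inv_smul_sub {E : Type*} [NormedAddCommGroup E]
    [NormedSpace ℝ E] [MeasurableSpace E] [BorelSpace E] [FiniteDimensional ℝ E]
    (μ : Measure E) [μ.IsAddHaarMeasure] (g : E → ℝ) {L : ℝ} (hL : 0 < L) (x : E) :
    ∫ y, (L ^ Module.finrank ℝ E)⁻¹ * g (L⁻¹ • (y - x)) ∂μ = ∫ y, g y ∂μ := by
  rw [integral_const_mul, integral_sub_right_eq_self (fun y ↦ g (L⁻¹ • y)),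
    Measure.integral_comp_inv_smul_of_nonneg μ g hL.le, smul_eq_mul,
    inv_mul_cancel_left₀ (by positivity)]

section SchurKernel

variable {n N : ℕ} {δ : ℝ}

lemma schurKernel_comm (ξ₁ ξ₂ : Rn n) : schurKernel n δ N ξ₁ ξ₂ = schurKernel n δ N ξ₂ ξ₁ := by
  rw [schurKernel, schurKernel, norm_sub_rev, add_right_comm 1 ‖ξ₁‖, mul_comm ((1 + ‖ξ₁‖) ^ _)]

lemma schurKernel_nonneg (ξ₁ ξ₂ : Rn n) : 0 ≤ schurKernel n δ N ξ₁ ξ₂ := by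
  unfold schurKernel
  positivity

lemma schurKernel_le (hδ0 : 0 ≤ δ) (hδ1 : δ ≤ 1) (hN : 2 * ((n : ℝ) + 1) ≤ (1 - δ) * N)
    (ξ₁ ξ₂ : Rn n) :
    schurKernel n δ N ξ₁ ξ₂ ≤ 3 ^ ((n : ℝ) * δ / 2) * √(8 ^ N) *
      ((((1 + ‖ξ₁‖) ^ δ) ^ n)⁻¹ * (1 + ‖((1 + ‖ξ₁‖) ^ δ)⁻¹ • (ξ₂ - ξ₁)‖) ^ (-((n : ℝ) + 1)) +
        (1 + ‖ξ₂‖) ^ (-((n : ℝ) + 1))) := by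
  have ha : 0 < 1 + ‖ξ₁‖ := by positivity
  have hweight : (1 + ‖ξ₁‖) ^ (-(2 * ((n : ℝ) * δ / 2))) = (((1 + ‖ξ₁‖) ^ δ) ^ n)⁻¹ := by
    rw [← rpow_natCast, ← rpow_mul ha.le, ← rpow_neg ha.le]
    ring_nf
  have hscale : ‖ξ₁ - ξ₂‖ / (1 + ‖ξ₁‖) ^ δ = ‖((1 + ‖ξ₁‖) ^ δ)⁻¹ • (ξ₂ - ξ₁)‖ := by
    rw [norm_smul, norm_inv, norm_of_nonneg (by positivity), norm_sub_rev, inv_mul_eq_div]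
  rw [← hweight, ← hscale, schurKernel, show -(n : ℝ) * δ / 2 = -((n : ℝ) * δ / 2) by ring,
    show 1 + ‖ξ₁‖ + ‖ξ₂‖ = (1 + ‖ξ₁‖) + (1 + ‖ξ₂‖) - 1 by ring]
  refine schurKernel_profile_le (by simp) (by simp) (norm_nonneg _) ?_ ?_ hδ0 hδ1 (by positivity)
    (by positivity) hN
  · linarith [norm_sub_norm_le ξ₁ ξ₂]
  · linarith [norm_sub_norm_le ξ₂ ξ₁, norm_sub_rev ξ₁ ξ₂]

lemma integral_schurKernel_le (hδ0 : 0 ≤ δ) (hδ1 : δ ≤ 1)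
    (hN : 2 * ((n : ℝ) + 1) ≤ (1 - δ) * N) (ξ₁ : Rn n) :
    ∫ ξ₂, schurKernel n δ N ξ₁ ξ₂ ≤
      3 ^ ((n : ℝ) * δ / 2) * √(8 ^ N) * (2 * ∫ u : Rn n, (1 + ‖u‖) ^ (-((n : ℝ) + 1))) := by
  set g : Rn n → ℝ := fun u ↦ (1 + ‖u‖) ^ (-((n : ℝ) + 1))
  set L := (1 + ‖ξ₁‖) ^ δ
  have hL : 0 < L := by positivity
  have hg : Integrable g := integrable_one_add_norm (by simp)
  have hg' : Integrable fun ξ₂ ↦ (L ^ n)⁻¹ * g (L⁻¹ • (ξ₂ - ξ₁)) :=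
    ((hg.comp_smul (inv_ne_zero hL.ne')).comp_sub_right ξ₁).const_mul _
  have hscale := integral_inv_pow_mul_comp_inv_smul_sub volume g hL ξ₁
  rw [finrank_euclideanSpace_fin] at hscale
  calc ∫ ξ₂, schurKernel n δ N ξ₁ ξ₂
      ≤ ∫ ξ₂, 3 ^ ((n : ℝ) * δ / 2) * √(8 ^ N) * ((L ^ n)⁻¹ * g (L⁻¹ • (ξ₂ - ξ₁)) + g ξ₂) :=
        integral_mono_of_nonneg (.of_forall (schurKernel_nonneg ξ₁)) ((hg'.add hg).const_mul _)
          (.of_forall (schurKernel_le hδ0 hδ1 hN ξ₁))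
    _ = 3 ^ ((n : ℝ) * δ / 2) * √(8 ^ N) * (2 * ∫ u, g u) := by
        rw [integral_const_mul, integral_add hg' hg, hscale, two_mul]

end SchurKernel

theorem statement1_general (n : ℕ) (δ : ℝ) (hδ0 : 0 ≤ δ) (hδ1 : δ < 1) :
    ∃ N₀ : ℕ, ∀ N' : ℕ, N₀ ≤ N' → ∃ B : ℝ,
      (∀ ξ₁ : Rn n, (∫ ξ₂ : Rn n, schurKernel n δ N' ξ₁ ξ₂) ≤ B) ∧
      (∀ ξ₂ : Rn n, (∫ ξ₁ : Rn n, schurKernel n δ N' ξ₁ ξ₂) ≤ B) := by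
  refine ⟨⌈2 * ((n : ℝ) + 1) / (1 - δ)⌉₊, fun N hN ↦ ?_⟩
  have hN' : 2 * ((n : ℝ) + 1) ≤ (1 - δ) * N := by
    rw [← div_le_iff₀' (by linarith)]
    exact (Nat.le_ceil _).trans (by exact_mod_cast hN)
  refine ⟨_, integral_schurKernel_le hδ0 hδ1.le hN', fun ξ₂ ↦ ?_⟩
  simp_rw [schurKernel_comm _ ξ₂]
  exact integral_schurKernel_le hδ0 hδ1.le hN' ξ₂

/-- The Schur-test integrability of the kernel
`K(ξ₁,ξ₂) = (1+|ξ₁|)^{-nδ/2}(1+|ξ₂|)^{-nδ/2}(1+|ξ₁-ξ₂|^{N'}/(1+|ξ₁|+|ξ₂|)^{δN'})^{-1/2}`. -/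
theorem statement1 (n : ℕ) (hn : 1 ≤ n) (δ : ℝ) (hδ0 : 0 ≤ δ) (hδ1 : δ < 1) :
    ∃ N₀ : ℕ, ∀ N' : ℕ, N₀ ≤ N' → ∃ B : ℝ,
      (∀ ξ₁ : Rn n, (∫ ξ₂ : Rn n, schurKernel n δ N' ξ₁ ξ₂) ≤ B) ∧
      (∀ ξ₂ : Rn n, (∫ ξ₁ : Rn n, schurKernel n δ N' ξ₁ ξ₂) ≤ B) :=
  statement1_general n δ hδ0 hδ1

end OIOPaper
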